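/- Let A be a finite nonempty set and T a symmetric, irreflexive, saturated relation on A. If Q, Q₁, Q₂ ∈ 𝒫^T(A) satisfy Q₁ ⊆ Q^T, Q₂ ⊆ Q₁^T, and Q ⊆ Q₂^T, then ((Q₁ ∪ Q₂)^T)^T ⊆ Q^T; i.e. the orthoalgebra (𝒫^T(A), ⊕, ∅, A) with Q ⊕ Q₁ := ((Q ∪ Q₁)^T)^T is coherent: whenever Q ⊕ Q₁, Q₁ ⊕ Q₂ and Q₂ ⊕ Q are defined, Q ⊕ (Q₁ ⊕ Q₂) is defined. -/

import Mathlib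

/-!
By symmetry of `T`, `Q₁ ⊆ Q^T` turns into `Q ⊆ Q₁^T`; together with `Q ⊆ Q₂^T` this puts `Q`
inside `Q₁^T ∩ Q₂^T = (Q₁ ∪ Q₂)^T`, and `B ↦ B^T` is antitone.
-/

/-- For `B ⊆ A`, `B^T := {l ∈ A | ∀ l₁ ∈ B, (l₁, l) ∈ T}`. -/
def polar {α : Type*} (T : α → α → Prop) (B : Set α) : Set α :=
  {l | ∀ l₁ ∈ B, T l₁ l}

/-- `𝒫_T(A)`: subsets whose distinct elements are pairwise related by `T`. -/
def PTset {α : Type*} (T : α → α → Prop) : Set (Set α) :=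
  {U | ∀ l ∈ U, ∀ l₁ ∈ U, l₁ ≠ l → T l l₁}

/-- `𝒫^T(A)`: the image of `𝒫_T(A)` under `B ↦ B^T`. -/
def PTup {α : Type*} (T : α → α → Prop) : Set (Set α) :=
  polar T '' PTset T

/-- `T` is symmetric: for all `l ≠ l₁`, `(l, l₁) ∈ T ↔ (l₁, l) ∈ T`. -/
def SymmRel {α : Type*} (T : α → α → Prop) : Prop :=
  ∀ l l₁, l ≠ l₁ → (T l l₁ ↔ T l₁ l)

/-- `T` is irreflexive. -/
def IrreflRel {α : Type*} (T : α → α → Prop) : Prop :=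
  ∀ l, ¬ T l l

/-- `M` is a maximal element of `𝒫_T(A)` with respect to inclusion. -/
def MaxPT {α : Type*} (T : α → α → Prop) (M : Set α) : Prop :=
  M ∈ PTset T ∧ ∀ M' ∈ PTset T, M ⊆ M' → M' = M

/-- `T` is saturated: for every maximal `M ∈ 𝒫_T(A)` and every `B ⊆ M`,
`B^T = ((M \ B)^T)^T`. -/
def SaturatedRel {α : Type*} (T : α → α → Prop) : Prop :=
  ∀ M, MaxPT T M → ∀ B ⊆ M, polar T B = polar T (polar T (M \ B))

section Polar

variable {α : Type*} {T : α → α → Prop}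

theorem polar_anti {B C : Set α} (h : B ⊆ C) : polar T C ⊆ polar T B :=
  fun _ hx l hl => hx l (h hl)

theorem polar_union (B C : Set α) : polar T (B ∪ C) = polar T B ∩ polar T C := by
  ext x
  simp only [polar, Set.mem_ofPred_eq, Set.mem_union, Set.mem_inter_iff, or_imp, forall_and]

theorem SymmRel.swap (hsymm : SymmRel T) {a b : α} (h : T a b) : T b a := by
  by_cases hab : a = b
  · exact hab ▸ h
  · exact (hsymm a b hab).mp h

theorem SymmRel.subset_polar_comm (hsymm : SymmRel T) {B C : Set α} (h : B ⊆ polar T C) :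
    C ⊆ polar T B :=
  fun _ hc _ hb => hsymm.swap (h hb _ hc)

end Polar

theorem stmt7_general {α : Type*} (T : α → α → Prop)
    (hsymm : SymmRel T) :
    ∀ Q ∈ PTup T, ∀ Q₁ ∈ PTup T, ∀ Q₂ ∈ PTup T,
      Q₁ ⊆ polar T Q → Q₂ ⊆ polar T Q₁ → Q ⊆ polar T Q₂ →
      polar T (polar T (Q₁ ∪ Q₂)) ⊆ polar T Q := by
  intro Q _ Q₁ _ Q₂ _ hQ₁ _ hQ
  have hQ_union : Q ⊆ polar T (Q₁ ∪ Q₂) := by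
    rw [polar_union]
    exact Set.subset_inter (hsymm.subset_polar_comm hQ₁) hQ
  exact polar_anti hQ_union

theorem stmt7 {α : Type*} [Fintype α] [Nonempty α] (T : α → α → Prop)
    (hsymm : SymmRel T) (hirr : IrreflRel T) (hsat : SaturatedRel T) :
    ∀ Q ∈ PTup T, ∀ Q₁ ∈ PTup T, ∀ Q₂ ∈ PTup T,
      Q₁ ⊆ polar T Q → Q₂ ⊆ polar T Q₁ → Q ⊆ polar T Q₂ →
      polar T (polar T (Q₁ ∪ Q₂)) ⊆ polar T Q :=
  stmt7_general T hsymm
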